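/- For X ~ Bern(p), p ≤ 1/2, with Hamming distortion and TV perception constraint P ≤ p, the rate-distortion-perception function reaches zero exactly when D ≥ D2 := 2p(1−p) + (2p−1)P; at D = D2, the choice a = b = (1−p) + P makes X̂ independent of X while satisfying P(X≠X̂) = D2 and d_TV(p_X, p_{X̂}) = P. -/

import Mathlib

open scoped BigOperators ENNReal

/-- A probability mass function on a finite alphabet. -/
def IsPMF {𝓧 : Type*} [Fintype 𝓧] (p : 𝓧 → ℝ) : Prop :=
  (∀ x, 0 ≤ p x) ∧ ∑ x, p x = 1

/-- A conditional distribution (channel/kernel) on a finite alphabet. -/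
def IsKernel {𝓧 : Type*} [Fintype 𝓧] (K : 𝓧 → 𝓧 → ℝ) : Prop :=
  ∀ x, IsPMF (K x)

/-- Output (marginal) distribution of the reconstruction `X̂`. -/
def outDist {𝓧 : Type*} [Fintype 𝓧] (p : 𝓧 → ℝ) (K : 𝓧 → 𝓧 → ℝ) : 𝓧 → ℝ :=
  fun y => ∑ x, p x * K x y

/-- Expected distortion `E[Δ(X, X̂)]`. -/
def expDistortion {𝓧 : Type*} [Fintype 𝓧] (p : 𝓧 → ℝ) (Δ : 𝓧 → 𝓧 → ℝ)
    (K : 𝓧 → 𝓧 → ℝ) : ℝ :=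
  ∑ x, ∑ y, p x * K x y * Δ x y

/-- Mutual information `I(X; X̂)` (natural log). -/
noncomputable def mutualInfo {𝓧 : Type*} [Fintype 𝓧] (p : 𝓧 → ℝ) (K : 𝓧 → 𝓧 → ℝ) : ℝ :=
  ∑ x, ∑ y, p x * K x y * Real.log (K x y / outDist p K y)

/-- The rate-distortion-perception function
`R(D,P) = min { I(X;X̂) : E[Δ(X,X̂)] ≤ D, d(p_X, p_X̂) ≤ P }`,
with the convention that the minimum over an empty set is `+∞`. -/
noncomputable def RDP {𝓧 : Type*} [Fintype 𝓧] (p : 𝓧 → ℝ) (Δ : 𝓧 → 𝓧 → ℝ)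
    (d : (𝓧 → ℝ) → (𝓧 → ℝ) → ℝ) (D P : ℝ) : ℝ≥0∞ :=
  sInf { r : ℝ≥0∞ | ∃ K : 𝓧 → 𝓧 → ℝ, IsKernel K ∧ expDistortion p Δ K ≤ D ∧
    d p (outDist p K) ≤ P ∧ r = ENNReal.ofReal (mutualInfo p K) }

/-- The rate-distortion function without perception constraint, `R(D, ∞)`. -/
noncomputable def RDPinf {𝓧 : Type*} [Fintype 𝓧] (p : 𝓧 → ℝ) (Δ : 𝓧 → 𝓧 → ℝ)
    (D : ℝ) : ℝ≥0∞ :=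
  sInf { r : ℝ≥0∞ | ∃ K : 𝓧 → 𝓧 → ℝ, IsKernel K ∧ expDistortion p Δ K ≤ D ∧
    r = ENNReal.ofReal (mutualInfo p K) }

/-- The Bernoulli(p) pmf on Bool: `P(X = true) = p`. -/
def bern (p : ℝ) : Bool → ℝ := fun b => if b then p else 1 - p

/-- Hamming distortion on Bool. -/
def hamming : Bool → Bool → ℝ := fun x y => if x = y then 0 else 1

/-- Total variation distance between two pmfs on a finite alphabet. -/
noncomputable def dTV {𝓧 : Type*} [Fintype 𝓧] (p q : 𝓧 → ℝ) : ℝ := (1 / 2) * ∑ z, |p z - q z|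

/-- Binary entropy (natural log). -/
noncomputable def Hb (x : ℝ) : ℝ := -(x * Real.log x) - (1 - x) * Real.log (1 - x)

/-- Ternary entropy of the distribution (p₁, p₂, 1 − p₁ − p₂) (natural log). -/
noncomputable def Ht (p₁ p₂ : ℝ) : ℝ :=
  -(p₁ * Real.log p₁) - p₂ * Real.log p₂ - (1 - p₁ - p₂) * Real.log (1 - p₁ - p₂)

/-! With `a = K(0|0)`, `b = K(0|1)` and `q = (1 - p) a + p b = P(X̂ = 0)`, the mutual information is
the Jensen gap `H(q) - (1 - p) H(a) - p H(b)` of the binary entropy. Since `-H(x) - 2x²` is still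
convex, this gap is at least `2p(1 - p)(a - b)²`. The distortion and perception constraints are
linear in `(a, b)`; adding the perception constraint with weight `1 - 2p ≥ 0` to the distortion
constraint gives `2p(1 - p)(a - b) ≥ D₂ - D`, so below `D₂` every admissible channel carries
information at least `(D₂ - D)² / (2p(1 - p))`. At `D₂` the constant channel `a = b = 1 - p + P`
is admissible and carries none. -/

open Real

lemma convexOn_neg_binEntropy_sub_two_mul_sq :
    ConvexOn ℝ (Set.Icc 0 1) (fun x => -binEntropy x - 2 * x ^ 2) := by
  refine convexOn_of_hasDerivWithinAt2_nonneg (convex_Icc 0 1)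
    (f' := fun x => log x - log (1 - x) - 4 * x) (f'' := fun x => x⁻¹ + (1 - x)⁻¹ - 4)
    (by fun_prop) ?_ ?_ ?_ <;>
  intro x hx <;> rw [interior_Icc] at hx <;> obtain ⟨hx0, hx1⟩ := hx
  · refine ((hasDerivAt_binEntropy hx0.ne' hx1.ne).fun_neg.fun_sub
      ((hasDerivAt_pow 2 x).const_mul 2)).hasDerivWithinAt.congr_deriv ?_
    norm_num
    ring
  · refine (((hasDerivAt_log hx0.ne').fun_sub (((hasDerivAt_id' x).const_sub 1).log
      (by simp; linarith))).fun_sub ((hasDerivAt_id' x).const_mul 4)).hasDerivWithinAt.congr_deriv ?_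
    simp only [div_eq_mul_inv]
    ring
  · have hx1' : 0 < 1 - x := by linarith
    rw [sub_nonneg, inv_add_inv hx0.ne' hx1'.ne', le_div_iff₀ (by positivity)]
    nlinarith [sq_nonneg (2 * x - 1)]

lemma two_mul_mul_sq_le_binEntropy_sub {w a b : ℝ} (hw₀ : 0 ≤ w) (hw₁ : w ≤ 1)
    (ha : a ∈ Set.Icc (0 : ℝ) 1) (hb : b ∈ Set.Icc (0 : ℝ) 1) :
    2 * w * (1 - w) * (a - b) ^ 2 ≤
      binEntropy ((1 - w) * a + w * b) - (1 - w) * binEntropy a - w * binEntropy b := by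
  have h := convexOn_neg_binEntropy_sub_two_mul_sq.2 ha hb (sub_nonneg.2 hw₁) hw₀
    (sub_add_cancel 1 w)
  simp only [smul_eq_mul] at h
  linear_combination h

section Channel

variable {𝓧 : Type*} [Fintype 𝓧]

lemma IsPMF.outDist {p : 𝓧 → ℝ} {K : 𝓧 → 𝓧 → ℝ} (hp : IsPMF p) (hK : IsKernel K) :
    IsPMF (outDist p K) := by
  refine ⟨fun y => Finset.sum_nonneg fun x _ => mul_nonneg (hp.1 x) ((hK x).1 y), ?_⟩
  simp only [_root_.outDist]
  rw [Finset.sum_comm]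
  simp only [← Finset.mul_sum, (hK _).2, mul_one, hp.2]

lemma mutualInfo_eq_sum_negMulLog_sub {p : 𝓧 → ℝ} {K : 𝓧 → 𝓧 → ℝ} (hp : IsPMF p)
    (hK : IsKernel K) :
    mutualInfo p K = ∑ y, negMulLog (outDist p K y) - ∑ x, p x * ∑ y, negMulLog (K x y) := by
  have hterm : ∀ x y, p x * K x y * log (K x y / outDist p K y) =
      p x * K x y * log (K x y) - p x * K x y * log (outDist p K y) := by
    intro x y
    rcases (mul_nonneg (hp.1 x) ((hK x).1 y)).eq_or_lt with h | h
    · simp [← h]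
    · have hout : p x * K x y ≤ outDist p K y :=
        Finset.single_le_sum (fun x' _ => mul_nonneg (hp.1 x') ((hK x').1 y)) (Finset.mem_univ x)
      rw [log_div (pos_of_mul_pos_right h (hp.1 x)).ne' (h.trans_le hout).ne', mul_sub]
  simp only [mutualInfo, hterm, Finset.sum_sub_distrib, negMulLog, Finset.mul_sum]
  rw [Finset.sum_comm (f := fun x y => p x * K x y * log (outDist p K y))]
  simp only [← Finset.sum_mul, _root_.outDist]
  simp only [neg_mul, Finset.sum_neg_distrib, mul_neg, sub_neg_eq_add, mul_assoc]
  ring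

lemma outDist_const {p : 𝓧 → ℝ} (hp : ∑ x, p x = 1) (r : 𝓧 → ℝ) :
    outDist p (fun _ => r) = r := by
  ext y
  simp [_root_.outDist, ← Finset.sum_mul, hp]

lemma mutualInfo_const {p : 𝓧 → ℝ} (hp : ∑ x, p x = 1) (r : 𝓧 → ℝ) :
    mutualInfo p (fun _ => r) = 0 := by
  simp [mutualInfo, outDist_const hp]

lemma RDP_le_ofReal_mutualInfo {p : 𝓧 → ℝ} {Δ : 𝓧 → 𝓧 → ℝ} {d : (𝓧 → ℝ) → (𝓧 → ℝ) → ℝ}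
    {D P : ℝ} {K : 𝓧 → 𝓧 → ℝ} (hK : IsKernel K) (hD : expDistortion p Δ K ≤ D)
    (hP : d p (outDist p K) ≤ P) :
    RDP p Δ d D P ≤ ENNReal.ofReal (mutualInfo p K) :=
  sInf_le ⟨K, hK, hD, hP, rfl⟩

end Channel

lemma IsPMF.apply_true {r : Bool → ℝ} (hr : IsPMF r) : r true = 1 - r false := by
  linarith [Fintype.sum_bool r ▸ hr.2]

lemma IsPMF.sum_negMulLog_eq_binEntropy {r : Bool → ℝ} (hr : IsPMF r) :
    ∑ y, negMulLog (r y) = binEntropy (r false) := by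
  rw [Fintype.sum_bool, hr.apply_true, binEntropy_eq_negMulLog_add_negMulLog_one_sub, add_comm]

lemma dTV_bool_eq_abs_sub {r s : Bool → ℝ} (h : ∑ z, r z = ∑ z, s z) :
    dTV r s = |r false - s false| := by
  rw [Fintype.sum_bool, Fintype.sum_bool] at h
  rw [dTV, Fintype.sum_bool, show r true - s true = -(r false - s false) by linarith, abs_neg]
  ring

lemma sum_bern (p : ℝ) : ∑ b, bern p b = 1 := by
  simp [bern]

lemma isPMF_bern {p : ℝ} (hp₀ : 0 ≤ p) (hp₁ : p ≤ 1) : IsPMF (bern p) :=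
  ⟨fun b => by cases b <;> simp [bern] <;> linarith, sum_bern p⟩

lemma outDist_bern_false (p : ℝ) (K : Bool → Bool → ℝ) :
    outDist (bern p) K false = (1 - p) * K false false + p * K true false := by
  simp [outDist, bern, add_comm]

lemma expDistortion_bern_hamming (p : ℝ) (K : Bool → Bool → ℝ) :
    expDistortion (bern p) hamming K = (1 - p) * K false true + p * K true false := by
  simp [expDistortion, bern, hamming, add_comm]

lemma mutualInfo_bern_eq {p : ℝ} (hp₀ : 0 ≤ p) (hp₁ : p ≤ 1) {K : Bool → Bool → ℝ}
    (hK : IsKernel K) :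
    mutualInfo (bern p) K = binEntropy ((1 - p) * K false false + p * K true false) -
      (1 - p) * binEntropy (K false false) - p * binEntropy (K true false) := by
  have hp := isPMF_bern hp₀ hp₁
  rw [mutualInfo_eq_sum_negMulLog_sub hp hK, (hp.outDist hK).sum_negMulLog_eq_binEntropy,
    outDist_bern_false, Fintype.sum_bool, (hK true).sum_negMulLog_eq_binEntropy,
    (hK false).sum_negMulLog_eq_binEntropy]
  simp only [bern, if_true, Bool.false_eq_true, if_false]
  ring

lemma two_mul_mul_sq_le_mutualInfo_bern {p : ℝ} (hp₀ : 0 ≤ p) (hp₁ : p ≤ 1)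
    {K : Bool → Bool → ℝ} (hK : IsKernel K) :
    2 * p * (1 - p) * (K false false - K true false) ^ 2 ≤ mutualInfo (bern p) K := by
  have hmem : ∀ x, K x false ∈ Set.Icc (0 : ℝ) 1 := fun x =>
    ⟨(hK x).1 false, by linarith [(hK x).apply_true, (hK x).1 true]⟩
  rw [mutualInfo_bern_eq hp₀ hp₁ hK]
  exact two_mul_mul_sq_le_binEntropy_sub hp₀ hp₁ (hmem false) (hmem true)

lemma RDP_bern_hamming_dTV_pos {p Pc D : ℝ} (hp₀ : 0 < p) (hp₂ : p ≤ 1 / 2)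
    (hD : D < 2 * p * (1 - p) + (2 * p - 1) * Pc) :
    0 < RDP (bern p) hamming dTV D Pc := by
  set c := 2 * p * (1 - p)
  set t := c + (2 * p - 1) * Pc - D
  have hc : 0 < c := mul_pos (by positivity) (by linarith)
  have ht : 0 < t := by linarith
  refine (ENNReal.ofReal_pos.2 (div_pos (pow_pos ht 2) hc)).trans_le (le_sInf ?_)
  rintro _ ⟨K, hK, hDK, hPK, rfl⟩
  have hbern := isPMF_bern hp₀.le (by linarith)
  rw [expDistortion_bern_hamming, (hK false).apply_true] at hDK
  rw [dTV_bool_eq_abs_sub (by rw [hbern.2, (hbern.outDist hK).2]), outDist_bern_false] at hPK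
  have hPK' := (neg_le_abs _).trans hPK
  simp only [bern, Bool.false_eq_true, if_false] at hPK'
  have hsep : t ≤ c * (K false false - K true false) := by
    linarith [mul_nonneg (by linarith : 0 ≤ 1 - 2 * p)
      (by linarith : 0 ≤ Pc + (1 - p) - ((1 - p) * K false false + p * K true false))]
  refine ENNReal.ofReal_le_ofReal ?_
  calc t ^ 2 / c ≤ (c * (K false false - K true false)) ^ 2 / c := by gcongr
    _ = c * (K false false - K true false) ^ 2 := by field_simp
    _ ≤ mutualInfo (bern p) K := two_mul_mul_sq_le_mutualInfo_bern hp₀.le (by linarith) hK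

/-- STATEMENT 12: for X ~ Bern(p), p ≤ 1/2, Hamming distortion and TV perception constraint
with P ≤ p, the rate-distortion-perception function reaches zero exactly when
D ≥ D₂ = 2p(1−p) + (2p−1)P; and at D = D₂ the choice a = b = (1−p) + P makes X̂ independent
of X (so I(X;X̂) = 0) while satisfying P(X ≠ X̂) = D₂ and d_TV(p_X, p_X̂) = P. -/
theorem bernoulli_rdp_zero_iff (p Pc : ℝ) (hp : 0 < p) (hp2 : p ≤ 1 / 2)
    (hP0 : 0 ≤ Pc) (hPp : Pc ≤ p) :
    (∀ D : ℝ, RDP (bern p) hamming dTV D Pc = 0 ↔ 2 * p * (1 - p) + (2 * p - 1) * Pc ≤ D) ∧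
    -- the constant kernel a = b = (1−p) + P (i.e. P(X̂ = 0) = (1−p) + P regardless of X):
    (∀ K : Bool → Bool → ℝ,
      K = (fun _ y => if y then p - Pc else (1 - p) + Pc) →
      IsKernel K ∧
      expDistortion (bern p) hamming K = 2 * p * (1 - p) + (2 * p - 1) * Pc ∧
      dTV (bern p) (outDist (bern p) K) = Pc ∧
      mutualInfo (bern p) K = 0) := by
  set r : Bool → ℝ := fun y => if y then p - Pc else (1 - p) + Pc
  have hr : IsPMF r := ⟨fun y => by cases y <;> simp [r] <;> linarith, by simp [r]⟩
  have hconst : IsKernel (fun _ => r) ∧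
      expDistortion (bern p) hamming (fun _ => r) = 2 * p * (1 - p) + (2 * p - 1) * Pc ∧
      dTV (bern p) (outDist (bern p) fun _ => r) = Pc ∧
      mutualInfo (bern p) (fun _ => r) = 0 := by
    refine ⟨fun _ => hr, ?_, ?_, mutualInfo_const (sum_bern p) r⟩
    · rw [expDistortion_bern_hamming]
      simp only [r, if_true, Bool.false_eq_true, if_false]
      ring
    · rw [outDist_const (sum_bern p), dTV_bool_eq_abs_sub (by rw [sum_bern, hr.2])]
      simp [r, bern, abs_of_nonneg hP0]
  refine ⟨fun D => ⟨fun h => ?_, fun h => ?_⟩, fun K hK => hK ▸ hconst⟩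
  · by_contra! hD
    exact (RDP_bern_hamming_dTV_pos hp hp2 hD).ne' h
  · refine le_antisymm ?_ bot_le
    calc RDP (bern p) hamming dTV D Pc ≤ ENNReal.ofReal (mutualInfo (bern p) fun _ => r) :=
          RDP_le_ofReal_mutualInfo hconst.1 (hconst.2.1.trans_le h) hconst.2.2.1.le
      _ = 0 := by rw [hconst.2.2.2, ENNReal.ofReal_zero]
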